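/- Let M and M̃ be the label-extended adjacency matrices of two Unique Games instances on the same d-regular weighted graph G on n vertices with weights w_{uv} ≤ 1, whose permutations differ only on a set of edges of total weight at most ε·nd/2. Let 0 < θ < γ ≤ 1, let S be the span of the eigenvectors of the adjacency matrix A of G with eigenvalue greater than (1−γ)d, and assume every unit vector φ ∈ S satisfies ‖φ‖_∞ ≤ C/√n. Let Y be the span of the eigenvectors of M̃ with eigenvalue at least (1−γ)d, with P_Y the orthogonal projection onto Y, and assume Y ≠ ℝ^{nk}. Then every unit eigenvector w of M with eigenvalue at least (1−θ)d satisfies ‖w − P_Y w‖ ≤ (2C√ε + 2√(θ/γ)) / (γ − θ); in other words, w = α y + β y_⊥ with y ∈ Y, y_⊥ ⊥ Y both unit vectors and |β| ≤ (2C√ε + 2√(θ/γ))/(γ − θ). -/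

import Mathlib

/-!
Let `φ u = ‖x (u, ·)‖` be the block norms of the eigenvector `x`. Cauchy–Schwarz inside each
block gives `⟪x, M x⟫ ≤ ⟪φ, A φ⟫`, so `φ` has Rayleigh quotient at least `(1 - θ) d` for `A`;
since `A ≤ (1 - γ) d` on `Sᗮ`, the component `p` of `φ` orthogonal to `S` has `‖p‖² ≤ θ / γ`.
The two label-extended matrices differ only on disagreement edges `c`, whence
`⟪x, M x⟫ - ⟪x, M̃ x⟫ ≤ 2 ∑ c u v φ u φ v`. Writing `φ = s + p` with `s ∈ S`, so that
`|s u| ≤ C / √n`, a weighted Minkowski inequality bounds this sum by `d (C √ε + √(θ / γ))²`.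
Finally `M̃ ≤ (1 - γ) d` on `Yᗮ` gives `⟪x, M̃ x⟫ ≤ d - γ d ‖x - P_Y x‖²`, and the three
estimates combine to `γ ‖x - P_Y x‖² ≤ θ + 2 (C √ε + √(θ / γ))²`.
-/

open Matrix Finset RealInnerProductSpace

section EigenvectorSpan

variable {E : Type*} [NormedAddCommGroup E] [InnerProductSpace ℝ E]

def eigenvectorSpan (T : E →ₗ[ℝ] E) (P : ℝ → Prop) : Submodule ℝ E :=
  Submodule.span ℝ {v | v ≠ 0 ∧ ∃ μ, P μ ∧ T v = μ • v}

variable {T : E →ₗ[ℝ] E} {P : ℝ → Prop}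

theorem apply_mem_eigenvectorSpan {v : E} (hv : v ∈ eigenvectorSpan T P) :
    T v ∈ eigenvectorSpan T P := by
  refine Submodule.span_induction (fun u ⟨hu, μ, hμ, hTu⟩ => ?_) (by simp)
    (fun _ _ _ _ h₁ h₂ => by simpa using add_mem h₁ h₂)
    (fun a _ _ h => by simpa using Submodule.smul_mem _ a h) hv
  rw [hTu]
  exact Submodule.smul_mem _ μ (Submodule.subset_span ⟨hu, μ, hμ, hTu⟩)

theorem LinearMap.IsSymmetric.inner_map_self_le_of_mem_orthogonal_eigenvectorSpan
    [FiniteDimensional ℝ E] (hT : T.IsSymmetric) {c : ℝ} (hc : ∀ μ, ¬ P μ → μ ≤ c) {z : E}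
    (hz : z ∈ (eigenvectorSpan T P)ᗮ) : ⟪z, T z⟫ ≤ c * ‖z‖ ^ 2 := by
  set b := hT.eigenvectorBasis rfl
  set μ := hT.eigenvalues rfl
  -- in the eigenbasis, `z` has no component along the eigenvectors whose eigenvalue satisfies `P`
  have hterm : ∀ i, ⟪z, b i⟫ * ⟪b i, T z⟫ ≤ c * (⟪z, b i⟫ * ⟪b i, z⟫) := by
    intro i
    have hTb : ⟪b i, T z⟫ = μ i * ⟪b i, z⟫ := by
      rw [← hT, hT.apply_eigenvectorBasis, real_inner_smul_left]; rfl
    rw [hTb, real_inner_comm (b i) z]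
    by_cases hPi : P (μ i)
    · have hb : b i ∈ eigenvectorSpan T P := Submodule.subset_span
        ⟨b.orthonormal.ne_zero i, μ i, hPi, hT.apply_eigenvectorBasis rfl i⟩
      simp [Submodule.inner_right_of_mem_orthogonal hb hz]
    · nlinarith [hc _ hPi, mul_self_nonneg ⟪b i, z⟫]
  calc ⟪z, T z⟫ = ∑ i, ⟪z, b i⟫ * ⟪b i, T z⟫ := (b.sum_inner_mul_inner z (T z)).symm
    _ ≤ ∑ i, c * (⟪z, b i⟫ * ⟪b i, z⟫) := sum_le_sum fun i _ => hterm i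
    _ = c * ‖z‖ ^ 2 := by rw [← mul_sum, b.sum_inner_mul_inner, real_inner_self_eq_norm_sq]

theorem LinearMap.IsSymmetric.inner_map_self_le_of_eigenvectorSpan [FiniteDimensional ℝ E]
    (hT : T.IsSymmetric) {c D : ℝ} (hc : ∀ μ, ¬ P μ → μ ≤ c)
    (hD : ∀ v, ⟪v, T v⟫ ≤ D * ‖v‖ ^ 2) (x : E) :
    ⟪x, T x⟫ ≤ D * ‖x‖ ^ 2 - (D - c) * ‖x - (eigenvectorSpan T P).starProjection x‖ ^ 2 := by
  set U := eigenvectorSpan T P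
  set y := U.starProjection x
  set z := x - y
  have hy : y ∈ U := U.starProjection_apply_mem x
  have hz : z ∈ Uᗮ := U.sub_starProjection_mem_orthogonal x
  have hxyz : x = y + z := (add_sub_cancel y x).symm
  have hyz : ⟪y, z⟫ = 0 := Submodule.inner_right_of_mem_orthogonal hy hz
  have hTyz : ⟪y, T z⟫ = 0 := by
    rw [← hT]; exact Submodule.inner_right_of_mem_orthogonal (apply_mem_eigenvectorSpan hy) hz
  have hTzy : ⟪z, T y⟫ = 0 :=
    Submodule.inner_left_of_mem_orthogonal (apply_mem_eigenvectorSpan hy) hz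
  have hsplit : ⟪x, T x⟫ = ⟪y, T y⟫ + ⟪z, T z⟫ := by
    rw [hxyz, map_add, inner_add_left, inner_add_right, inner_add_right, hTyz, hTzy]; ring
  have hpyth : ‖x‖ ^ 2 = ‖y‖ ^ 2 + ‖z‖ ^ 2 := by
    rw [hxyz, norm_add_sq_real, hyz]; ring
  rw [hsplit, hpyth]
  linarith [hD y, hT.inner_map_self_le_of_mem_orthogonal_eigenvectorSpan hc hz]

end EigenvectorSpan

section QuadraticForm

variable {ι : Type*} [Fintype ι]

theorem span_eigenvectors_eq_eigenvectorSpan [DecidableEq ι] (B : Matrix ι ι ℝ)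
    (P : ℝ → Prop) :
    Submodule.span ℝ {v : EuclideanSpace ℝ ι | v ≠ 0 ∧ ∃ μ, P μ ∧ B *ᵥ v = μ • v} =
      eigenvectorSpan (toEuclideanLin B) P := by
  simp only [eigenvectorSpan, toLpLin_apply, ← (WithLp.ofLp_injective 2).eq_iff,
    WithLp.ofLp_smul]

theorem inner_toEuclideanLin_self [DecidableEq ι] (B : Matrix ι ι ℝ)
    (x : EuclideanSpace ℝ ι) : ⟪x, toEuclideanLin B x⟫ = ∑ u, ∑ v, B u v * (x u * x v) := by
  simp only [EuclideanSpace.inner_eq_star_dotProduct, toLpLin_apply, dotProduct,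
    mulVec, star_trivial, sum_mul]
  exact sum_congr rfl fun u _ => sum_congr rfl fun v _ => by ring

theorem inner_toEuclideanLin_self_of_mulVec_eq_smul [DecidableEq ι] {B : Matrix ι ι ℝ}
    {x : EuclideanSpace ℝ ι} {μ : ℝ} (hx : B *ᵥ x = μ • x) :
    ⟪x, toEuclideanLin B x⟫ = μ * ‖x‖ ^ 2 := by
  rw [toLpLin_apply, hx, WithLp.toLp_smul, WithLp.toLp_ofLp, real_inner_smul_right,
    real_inner_self_eq_norm_sq]

theorem two_mul_sum_sum_mul_mul_le (c : ι → ι → ℝ) (hc : ∀ u v, 0 ≤ c u v) (f : ι → ℝ) :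
    2 * ∑ u, ∑ v, c u v * (f u * f v) ≤
      ∑ u, (∑ v, c u v) * f u ^ 2 + ∑ v, (∑ u, c u v) * f v ^ 2 := by
  simp only [sum_mul, mul_sum]
  rw [sum_comm (f := fun v u => c u v * f v ^ 2), ← sum_add_distrib]
  refine sum_le_sum fun u _ => ?_
  rw [← sum_add_distrib]
  refine sum_le_sum fun v _ => ?_
  nlinarith [mul_nonneg (hc u v) (sq_nonneg (f u - f v))]

theorem inner_toEuclideanLin_self_le [DecidableEq ι] (B : Matrix ι ι ℝ) {d : ℝ}
    (hB : ∀ u v, 0 ≤ B u v) (hrow : ∀ u, ∑ v, B u v ≤ d) (hcol : ∀ v, ∑ u, B u v ≤ d)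
    (x : EuclideanSpace ℝ ι) : ⟪x, toEuclideanLin B x⟫ ≤ d * ‖x‖ ^ 2 := by
  have hsum : ∀ r : ι → ℝ, (∀ u, r u ≤ d) → ∑ u, r u * x u ^ 2 ≤ d * ‖x‖ ^ 2 := fun r hr => by
    rw [EuclideanSpace.real_norm_sq_eq, mul_sum]
    exact sum_le_sum fun u _ => mul_le_mul_of_nonneg_right (hr u) (sq_nonneg _)
  linarith [inner_toEuclideanLin_self B x, two_mul_sum_sum_mul_mul_le B hB x, hsum _ hrow,
    hsum _ hcol]

theorem sum_mul_add_sq_le (r f g : ι → ℝ) (hr : ∀ u, 0 ≤ r u) {A B : ℝ} (hA : 0 ≤ A)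
    (hB : 0 ≤ B) (hf : ∑ u, r u * f u ^ 2 ≤ A ^ 2) (hg : ∑ u, r u * g u ^ 2 ≤ B ^ 2) :
    ∑ u, r u * (f u + g u) ^ 2 ≤ (A + B) ^ 2 := by
  have hcs : (∑ u, r u * (f u * g u)) ^ 2 ≤ (∑ u, r u * f u ^ 2) * ∑ u, r u * g u ^ 2 :=
    sum_sq_le_sum_mul_sum_of_sq_le_mul _ (fun u _ => mul_nonneg (hr u) (sq_nonneg _))
      (fun u _ => mul_nonneg (hr u) (sq_nonneg _)) (fun u _ => le_of_eq (by ring))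
  have hfg : ∑ u, r u * (f u * g u) ≤ A * B := by
    have h1 : 0 ≤ ∑ u, r u * g u ^ 2 := sum_nonneg fun u _ => mul_nonneg (hr u) (sq_nonneg _)
    have : (∑ u, r u * (f u * g u)) ^ 2 ≤ (A * B) ^ 2 := by
      rw [mul_pow]; exact hcs.trans (mul_le_mul hf hg h1 (sq_nonneg _))
    exact abs_le_of_sq_le_sq' this (mul_nonneg hA hB) |>.2
  have hexp : ∑ u, r u * (f u + g u) ^ 2 =
      ∑ u, r u * f u ^ 2 + 2 * ∑ u, r u * (f u * g u) + ∑ u, r u * g u ^ 2 := by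
    simp only [mul_sum, ← sum_add_distrib]
    exact sum_congr rfl fun u _ => by ring
  nlinarith

theorem sum_mul_add_sq_le_of_abs_le (r s p : ι → ℝ) (hr : ∀ u, 0 ≤ r u) {d K A B : ℝ}
    (hd : 0 ≤ d) (hA : 0 ≤ A) (hB : 0 ≤ B) (hrd : ∀ u, r u ≤ d) (hs : ∀ u, |s u| ≤ K)
    (hK : K ^ 2 * ∑ u, r u ≤ d * A ^ 2) (hp : ∑ u, p u ^ 2 ≤ B ^ 2) :
    ∑ u, r u * (s u + p u) ^ 2 ≤ d * (A + B) ^ 2 := by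
  have hsd : ∀ X : ℝ, (√d * X) ^ 2 = d * X ^ 2 := fun X => by rw [mul_pow, Real.sq_sqrt hd]
  have hrs : ∑ u, r u * s u ^ 2 ≤ (√d * A) ^ 2 := by
    rw [hsd]
    have hs2 : ∀ u, s u ^ 2 ≤ K ^ 2 := fun u =>
      sq_abs (s u) ▸ pow_le_pow_left₀ (abs_nonneg _) (hs u) 2
    calc ∑ u, r u * s u ^ 2 ≤ ∑ u, K ^ 2 * r u :=
          sum_le_sum fun u _ => by rw [mul_comm]; exact mul_le_mul_of_nonneg_right (hs2 u) (hr u)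
      _ ≤ d * A ^ 2 := by rwa [← mul_sum]
  have hrp : ∑ u, r u * p u ^ 2 ≤ (√d * B) ^ 2 := by
    rw [hsd]
    calc ∑ u, r u * p u ^ 2 ≤ ∑ u, d * p u ^ 2 :=
          sum_le_sum fun u _ => mul_le_mul_of_nonneg_right (hrd u) (sq_nonneg _)
      _ ≤ d * B ^ 2 := by rw [← mul_sum]; exact mul_le_mul_of_nonneg_left hp hd
  have h := sum_mul_add_sq_le r s p hr (by positivity) (by positivity) hrs hrp
  rwa [← mul_add, hsd] at h

theorem sum_sum_mul_mul_add_le (c : ι → ι → ℝ) (hc : ∀ u v, 0 ≤ c u v) {d K A B : ℝ}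
    (hd : 0 ≤ d) (hA : 0 ≤ A) (hB : 0 ≤ B) (hrow : ∀ u, ∑ v, c u v ≤ d)
    (hcol : ∀ v, ∑ u, c u v ≤ d) (s p : ι → ℝ) (hs : ∀ u, |s u| ≤ K)
    (hK : K ^ 2 * ∑ u, ∑ v, c u v ≤ d * A ^ 2) (hp : ∑ u, p u ^ 2 ≤ B ^ 2) :
    ∑ u, ∑ v, c u v * ((s u + p u) * (s v + p v)) ≤ d * (A + B) ^ 2 := by
  have hrow' := sum_mul_add_sq_le_of_abs_le _ s p (fun u => sum_nonneg fun v _ => hc u v)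
    hd hA hB hrow hs hK hp
  have hcol' := sum_mul_add_sq_le_of_abs_le _ s p (fun v => sum_nonneg fun u _ => hc u v)
    hd hA hB hcol hs (by rwa [sum_comm]) hp
  linarith [two_mul_sum_sum_mul_mul_le c hc fun u => s u + p u]

end QuadraticForm

section LabelExtended

variable {V L : Type*} [DecidableEq L]

def labelExtended (w : V → V → ℝ) (π : V → V → Equiv.Perm L) : Matrix (V × L) (V × L) ℝ :=
  Matrix.of fun p q => w p.1 q.1 * if π p.1 q.1 p.2 = q.2 then 1 else 0

variable {w : V → V → ℝ}

theorem labelExtended_isHermitian (hw : ∀ u v, w u v = w v u) {π : V → V → Equiv.Perm L}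
    (hπ : ∀ u v, π v u = (π u v)⁻¹) : (labelExtended w π).IsHermitian := by
  ext p q
  simp only [conjTranspose_apply, labelExtended, of_apply, star_trivial, hw q.1, hπ q.1 p.1,
    Equiv.Perm.inv_eq_iff_eq, eq_comm (a := p.2)]

variable [Fintype V] [Fintype L]

theorem sum_labelExtended_apply_mul (π : V → V → Equiv.Perm L) (p : V × L) (f : V × L → ℝ) :
    ∑ q, labelExtended w π p q * f q = ∑ v, w p.1 v * f (v, π p.1 v p.2) := by
  simp [labelExtended, Fintype.sum_prod_type]

theorem sum_labelExtended_apply_right (π : V → V → Equiv.Perm L) (p : V × L) :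
    ∑ q, labelExtended w π p q = ∑ v, w p.1 v := by
  simpa using sum_labelExtended_apply_mul π p 1

theorem sum_labelExtended_apply_left (π : V → V → Equiv.Perm L) (q : V × L) :
    ∑ p, labelExtended w π p q = ∑ u, w u q.1 := by
  rw [Fintype.sum_prod_type]
  refine sum_congr rfl fun u _ => ?_
  simp only [labelExtended, of_apply, ← mul_sum]
  rw [Equiv.sum_comp (π u q.1) fun j => if j = q.2 then (1 : ℝ) else 0]
  simp

theorem inner_toEuclideanLin_labelExtended [DecidableEq V] (π : V → V → Equiv.Perm L)
    (x : EuclideanSpace ℝ (V × L)) :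
    ⟪x, toEuclideanLin (labelExtended w π) x⟫ =
      ∑ u, ∑ v, w u v * ∑ i, x (u, i) * x (v, π u v i) := by
  have hrow : ∀ p, ∑ q, labelExtended w π p q * (x p * x q) =
      ∑ v, w p.1 v * (x p * x (v, π p.1 v p.2)) := fun p =>
    sum_labelExtended_apply_mul π p fun q => x p * x q
  rw [inner_toEuclideanLin_self, Fintype.sum_congr _ _ hrow, Fintype.sum_prod_type]
  refine sum_congr rfl fun u _ => ?_
  simp only [mul_sum]
  exact sum_comm

end LabelExtended

section BlockNorm

variable {V L : Type*} [Fintype L]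

noncomputable def blockNorm (x : EuclideanSpace ℝ (V × L)) : EuclideanSpace ℝ V :=
  WithLp.toLp 2 fun u => √(∑ i, x (u, i) ^ 2)

theorem norm_blockNorm [Fintype V] (x : EuclideanSpace ℝ (V × L)) : ‖blockNorm x‖ = ‖x‖ := by
  rw [← sq_eq_sq₀ (norm_nonneg _) (norm_nonneg _), EuclideanSpace.real_norm_sq_eq,
    EuclideanSpace.real_norm_sq_eq, Fintype.sum_prod_type]
  exact sum_congr rfl fun u _ => Real.sq_sqrt (sum_nonneg fun i _ => sq_nonneg _)

theorem abs_sum_mul_perm_le_blockNorm (x : EuclideanSpace ℝ (V × L)) (u v : V)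
    (σ : Equiv.Perm L) : |∑ i, x (u, i) * x (v, σ i)| ≤ blockNorm x u * blockNorm x v := by
  have h := sum_mul_sq_le_sq_mul_sq univ (fun i => x (u, i)) fun i => x (v, σ i)
  rw [Equiv.sum_comp σ fun j => x (v, j) ^ 2] at h
  exact (Real.abs_le_sqrt h).trans_eq (Real.sqrt_mul (sum_nonneg fun i _ => sq_nonneg _) _)

end BlockNorm

section SupNorm

variable {V : Type*} [Fintype V] {S : Submodule ℝ (EuclideanSpace ℝ V)} {K : ℝ}

theorem abs_apply_le_mul_norm_of_mem (hK : ∀ φ ∈ S, ‖φ‖ = 1 → ∀ u, |φ u| ≤ K)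
    {s : EuclideanSpace ℝ V} (hs : s ∈ S) (u : V) : |s u| ≤ K * ‖s‖ := by
  rcases eq_or_ne s 0 with rfl | hs0
  · simp
  have hn : 0 < ‖s‖ := norm_pos_iff.2 hs0
  have h := hK _ (S.smul_mem ‖s‖⁻¹ hs) (norm_smul_inv_norm hs0) u
  rw [PiLp.smul_apply, smul_eq_mul, abs_mul, abs_inv, abs_norm, inv_mul_le_iff₀ hn] at h
  linarith

theorem nonneg_of_forall_abs_apply_le [Nonempty V] (hK : ∀ φ ∈ S, ‖φ‖ = 1 → ∀ u, |φ u| ≤ K)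
    {s : EuclideanSpace ℝ V} (hs : s ∈ S) (hs0 : s ≠ 0) : 0 ≤ K :=
  (abs_nonneg _).trans (hK _ (S.smul_mem ‖s‖⁻¹ hs) (norm_smul_inv_norm hs0) (Classical.arbitrary V))

theorem abs_starProjection_apply_le (hK : ∀ φ ∈ S, ‖φ‖ = 1 → ∀ u, |φ u| ≤ K) (hK0 : 0 ≤ K)
    {φ : EuclideanSpace ℝ V} (hφ : ‖φ‖ ≤ 1) (u : V) : |S.starProjection φ u| ≤ K :=
  (abs_apply_le_mul_norm_of_mem hK (S.starProjection_apply_mem φ) u).trans <|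
    mul_le_of_le_one_right hK0 <| (S.norm_starProjection_apply_le φ).trans hφ

end SupNorm

section UniqueGames

variable {V L : Type*} [Fintype V] [Fintype L] [DecidableEq V] [DecidableEq L] {w : V → V → ℝ}

theorem inner_labelExtended_le_inner_blockNorm (hw : ∀ u v, 0 ≤ w u v)
    (π : V → V → Equiv.Perm L) (x : EuclideanSpace ℝ (V × L)) :
    ⟪x, toEuclideanLin (labelExtended w π) x⟫ ≤
      ⟪blockNorm x, toEuclideanLin (of w) (blockNorm x)⟫ := by
  rw [inner_toEuclideanLin_labelExtended, inner_toEuclideanLin_self]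
  exact sum_le_sum fun u _ => sum_le_sum fun v _ => mul_le_mul_of_nonneg_left
    ((le_abs_self _).trans (abs_sum_mul_perm_le_blockNorm x u v _)) (hw u v)

theorem inner_toEuclideanLin_labelExtended_self_le {d : ℝ} (hw : ∀ u v, 0 ≤ w u v)
    (hrow : ∀ u, ∑ v, w u v ≤ d) (hcol : ∀ v, ∑ u, w u v ≤ d) (π : V → V → Equiv.Perm L)
    (x : EuclideanSpace ℝ (V × L)) : ⟪x, toEuclideanLin (labelExtended w π) x⟫ ≤ d * ‖x‖ ^ 2 :=
  inner_toEuclideanLin_self_le _ (fun p q => mul_nonneg (hw _ _) (by positivity))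
    (fun p => (sum_labelExtended_apply_right π p).trans_le (hrow p.1))
    (fun q => (sum_labelExtended_apply_left π q).trans_le (hcol q.1)) x

theorem inner_labelExtended_self_le_of_eigenvectorSpan {d γ : ℝ} (hw : ∀ u v, 0 ≤ w u v)
    (hw_symm : ∀ u v, w u v = w v u) (hrow : ∀ u, ∑ v, w u v ≤ d) (hcol : ∀ v, ∑ u, w u v ≤ d)
    {π : V → V → Equiv.Perm L} (hπ : ∀ u v, π v u = (π u v)⁻¹) (x : EuclideanSpace ℝ (V × L)) :
    ⟪x, toEuclideanLin (labelExtended w π) x⟫ ≤ d * ‖x‖ ^ 2 - γ * d *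
      ‖x - (eigenvectorSpan (toEuclideanLin (labelExtended w π)) ((1 - γ) * d ≤ ·)).starProjection
        x‖ ^ 2 := by
  have h := (isSymmetric_toEuclideanLin_iff.2 (labelExtended_isHermitian hw_symm hπ)
    ).inner_map_self_le_of_eigenvectorSpan (P := ((1 - γ) * d ≤ ·)) (fun μ h => (not_le.1 h).le)
    (inner_toEuclideanLin_labelExtended_self_le hw hrow hcol π) x
  linarith

theorem norm_blockNorm_sub_starProjection_le {d θ γ : ℝ} (hw : ∀ u v, 0 ≤ w u v)
    (hw_symm : ∀ u v, w u v = w v u) (hrow : ∀ u, ∑ v, w u v ≤ d) (hcol : ∀ v, ∑ u, w u v ≤ d)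
    (hd : 0 < d) (hγ : 0 < γ) (π : V → V → Equiv.Perm L) {x : EuclideanSpace ℝ (V × L)}
    (hx : ‖x‖ = 1) (hMx : (1 - θ) * d ≤ ⟪x, toEuclideanLin (labelExtended w π) x⟫) :
    ‖blockNorm x - (eigenvectorSpan (toEuclideanLin (of w)) ((1 - γ) * d < ·)).starProjection
      (blockNorm x)‖ ≤ √(θ / γ) := by
  have hsymm : (toEuclideanLin (of w)).IsSymmetric :=
    isSymmetric_toEuclideanLin_iff.2 (by ext u v; simp [hw_symm v u])
  have h := hsymm.inner_map_self_le_of_eigenvectorSpan (P := ((1 - γ) * d < ·))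
    (fun μ h => not_lt.1 h)
    (inner_toEuclideanLin_self_le _ hw hrow hcol) (blockNorm x)
  rw [norm_blockNorm, hx] at h
  refine (le_abs_self _).trans (Real.abs_le_sqrt ?_)
  rw [le_div_iff₀' hγ]
  nlinarith [inner_labelExtended_le_inner_blockNorm hw π x]

def disagreement (w : V → V → ℝ) (π π' : V → V → Equiv.Perm L) (u v : V) : ℝ :=
  if π u v = π' u v then 0 else w u v

theorem inner_labelExtended_sub_le (hw : ∀ u v, 0 ≤ w u v) (π π' : V → V → Equiv.Perm L)
    (x : EuclideanSpace ℝ (V × L)) :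
    ⟪x, toEuclideanLin (labelExtended w π) x⟫ - ⟪x, toEuclideanLin (labelExtended w π') x⟫ ≤
      2 * ∑ u, ∑ v, disagreement w π π' u v * (blockNorm x u * blockNorm x v) := by
  rw [inner_toEuclideanLin_labelExtended, inner_toEuclideanLin_labelExtended,
    ← sum_sub_distrib, mul_sum]
  refine sum_le_sum fun u _ => ?_
  rw [← sum_sub_distrib, mul_sum]
  refine sum_le_sum fun v _ => ?_
  unfold disagreement
  split_ifs with h
  · simp [h]
  · have h₁ := abs_le.1 (abs_sum_mul_perm_le_blockNorm x u v (π u v))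
    have h₂ := abs_le.1 (abs_sum_mul_perm_le_blockNorm x u v (π' u v))
    nlinarith [hw u v]

theorem inner_labelExtended_sub_le_of_abs_le {d ε C B : ℝ} (hw : ∀ u v, 0 ≤ w u v)
    (hrow : ∀ u, ∑ v, w u v ≤ d) (hcol : ∀ v, ∑ u, w u v ≤ d) (hd : 0 ≤ d) (hε : 0 ≤ ε)
    (hC : 0 ≤ C) (hB : 0 ≤ B) {π π' : V → V → Equiv.Perm L}
    (hdiff : ∑ u, ∑ v, disagreement w π π' u v ≤ ε * Fintype.card V * d)
    (x : EuclideanSpace ℝ (V × L)) (s : EuclideanSpace ℝ V)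
    (hs : ∀ u, |s u| ≤ C / √(Fintype.card V)) (hp : ‖blockNorm x - s‖ ≤ B) :
    ⟪x, toEuclideanLin (labelExtended w π) x⟫ - ⟪x, toEuclideanLin (labelExtended w π') x⟫ ≤
      2 * (d * (C * √ε + B) ^ 2) := by
  have hc : ∀ u v, 0 ≤ disagreement w π π' u v := fun u v => by
    unfold disagreement; split_ifs <;> simp [hw]
  have hcw : ∀ u v, disagreement w π π' u v ≤ w u v := fun u v => by
    unfold disagreement; split_ifs <;> simp [hw]
  have hK : (C / √(Fintype.card V)) ^ 2 * ∑ u, ∑ v, disagreement w π π' u v ≤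
      d * (C * √ε) ^ 2 := by
    rcases eq_or_ne (Fintype.card V : ℝ) 0 with hN | hN
    · simp [hN]; positivity
    rw [div_pow, Real.sq_sqrt (Nat.cast_nonneg _), mul_pow, Real.sq_sqrt hε]
    calc C ^ 2 / Fintype.card V * ∑ u, ∑ v, disagreement w π π' u v
        ≤ C ^ 2 / Fintype.card V * (ε * Fintype.card V * d) :=
          mul_le_mul_of_nonneg_left hdiff (by positivity)
      _ = d * (C ^ 2 * ε) := by field_simp
  have h := sum_sum_mul_mul_add_le _ hc hd (by positivity) hB
    (fun u => (sum_le_sum fun v _ => hcw u v).trans (hrow u))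
    (fun v => (sum_le_sum fun u _ => hcw u v).trans (hcol v)) s _ hs hK
    ((EuclideanSpace.real_norm_sq_eq _).symm.trans_le (pow_le_pow_left₀ (norm_nonneg _) hp 2))
  simp only [PiLp.sub_apply, add_sub_cancel] at h
  linarith [inner_labelExtended_sub_le hw π π' x]

theorem nonneg_of_forall_abs_apply_le_div_sqrt_card [Nonempty V] {d γ C : ℝ}
    (hreg : ∀ u, ∑ v, w u v = d) (hd : 0 < d) (hγ : 0 < γ)
    (hC : ∀ φ ∈ eigenvectorSpan (toEuclideanLin (of w)) ((1 - γ) * d < ·), ‖φ‖ = 1 →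
      ∀ u, |φ u| ≤ C / √(Fintype.card V)) : 0 ≤ C := by
  have hone : toEuclideanLin (of w) (WithLp.toLp 2 1) = d • WithLp.toLp 2 (1 : V → ℝ) := by
    ext u
    simp [toLpLin_apply, mulVec, dotProduct, hreg]
  have h := nonneg_of_forall_abs_apply_le hC
    (Submodule.subset_span ⟨by simp, d, by nlinarith, hone⟩) (by simp)
  rwa [le_div_iff₀ (by simp [Fintype.card_pos]), zero_mul] at h

end UniqueGames

theorem le_div_of_mul_sq_le {θ γ A t : ℝ} (hθ : 0 < θ) (hθγ : θ < γ) (hγ : γ ≤ 1) (hA : 0 ≤ A)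
    (h : γ * t ^ 2 ≤ θ + 2 * (A + √(θ / γ)) ^ 2) :
    t ≤ (2 * A + 2 * √(θ / γ)) / (γ - θ) := by
  set a := A + √(θ / γ)
  have hγ0 : 0 < γ := hθ.trans hθγ
  have ha : √(θ / γ) ≤ a := le_add_of_nonneg_left hA
  have hθa : θ ≤ γ * a ^ 2 := by
    have : θ / γ ≤ a ^ 2 := by
      rw [← Real.sq_sqrt (div_nonneg hθ.le hγ0.le)]
      exact pow_le_pow_left₀ (Real.sqrt_nonneg _) ha 2
    rwa [div_le_iff₀' hγ0] at this
  rw [show 2 * A + 2 * √(θ / γ) = 2 * a by ring, le_div_iff₀ (sub_pos.2 hθγ)]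
  have hsq : (t * (γ - θ)) ^ 2 ≤ (2 * a) ^ 2 := by
    nlinarith [mul_le_mul_of_nonneg_left h hγ0.le, sq_nonneg t, sq_nonneg a,
      mul_nonneg (sq_nonneg t) (mul_nonneg hθ.le (by linarith : (0:ℝ) ≤ 2 * γ - θ))]
  exact abs_le_of_sq_le_sq' hsq (by positivity) |>.2

theorem eigenvector_close_to_perturbed_eigenspace_general
    {n k : ℕ} (hn : 0 < n)
    (w : Fin n → Fin n → ℝ) (d ε C θ γ : ℝ)
    (hd : 0 < d) (hε : 0 ≤ ε) (hθ : 0 < θ) (hθγ : θ < γ) (hγ : γ ≤ 1)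
    (π π' : Fin n → Fin n → Equiv.Perm (Fin k))
    (hw_symm : ∀ u v, w u v = w v u)
    (hw_nonneg : ∀ u v, 0 ≤ w u v)
    (hπ'_symm : ∀ u v, π' v u = (π' u v)⁻¹)
    (hreg : ∀ u, ∑ v, w u v = d)
    (hdiff : (1 / 2) * ∑ u, ∑ v, (if π u v = π' u v then 0 else w u v)
        ≤ ε * n * d / 2)
    (A : Matrix (Fin n) (Fin n) ℝ) (hA : ∀ u v, A u v = w u v)
    (M : Matrix (Fin n × Fin k) (Fin n × Fin k) ℝ)
    (hM : ∀ p q, M p q = w p.1 q.1 * (if π p.1 q.1 p.2 = q.2 then 1 else 0))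
    (Mt : Matrix (Fin n × Fin k) (Fin n × Fin k) ℝ)
    (hMt : ∀ p q, Mt p q = w p.1 q.1 * (if π' p.1 q.1 p.2 = q.2 then 1 else 0))
    (S : Submodule ℝ (EuclideanSpace ℝ (Fin n)))
    (hS : S = Submodule.span ℝ {φ : EuclideanSpace ℝ (Fin n) |
        φ ≠ 0 ∧ ∃ μ : ℝ, (1 - γ) * d < μ ∧ A.mulVec φ = μ • φ})
    (hC : ∀ φ : EuclideanSpace ℝ (Fin n), φ ∈ S → ‖φ‖ = 1 →
        ∀ u, |φ u| ≤ C / Real.sqrt n)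
    (Y : Submodule ℝ (EuclideanSpace ℝ (Fin n × Fin k)))
    (hY : Y = Submodule.span ℝ {v : EuclideanSpace ℝ (Fin n × Fin k) |
        v ≠ 0 ∧ ∃ ν : ℝ, (1 - γ) * d ≤ ν ∧ Mt.mulVec v = ν • v})
    (x : EuclideanSpace ℝ (Fin n × Fin k)) (hx : ‖x‖ = 1)
    (lam : ℝ) (hlam : (1 - θ) * d ≤ lam)
    (hxeig : M.mulVec x = lam • x) :
    ‖x - (Y.orthogonalProjectionOnto x : EuclideanSpace ℝ (Fin n × Fin k))‖
      ≤ (2 * C * Real.sqrt ε + 2 * Real.sqrt (θ / γ)) / (γ - θ) := by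
  have hA' : A = of w := Matrix.ext hA
  have hM' : M = labelExtended w π := Matrix.ext hM
  have hMt' : Mt = labelExtended w π' := Matrix.ext hMt
  rw [hA', span_eigenvectors_eq_eigenvectorSpan] at hS
  rw [hMt', span_eigenvectors_eq_eigenvectorSpan] at hY
  have : Nonempty (Fin n) := ⟨⟨0, hn⟩⟩
  have hγ0 : 0 < γ := hθ.trans hθγ
  have hrow : ∀ u, ∑ v, w u v ≤ d := fun u => (hreg u).le
  have hcol : ∀ v, ∑ u, w u v ≤ d := fun v => by simpa only [hw_symm] using hrow v
  have hC0 : 0 ≤ C := nonneg_of_forall_abs_apply_le_div_sqrt_card hreg hd hγ0 (by simpa [← hS])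
  have hMx : (1 - θ) * d ≤ ⟪x, toEuclideanLin (labelExtended w π) x⟫ := by
    rwa [inner_toEuclideanLin_self_of_mulVec_eq_smul (hM' ▸ hxeig), hx, one_pow, mul_one]
  have hφS := norm_blockNorm_sub_starProjection_le hw_nonneg hw_symm hrow hcol hd hγ0 π hx hMx
  rw [← hS] at hφS
  have hs := abs_starProjection_apply_le hC (by positivity) (φ := blockNorm x)
    (by rw [norm_blockNorm, hx])
  have hpert := inner_labelExtended_sub_le_of_abs_le hw_nonneg hrow hcol hd.le hε hC0
    (Real.sqrt_nonneg (θ / γ)) (π := π) (π' := π')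
    (by rw [Fintype.card_fin]; unfold disagreement; linarith) x _ (by simpa using hs) hφS
  have hYx := inner_labelExtended_self_le_of_eigenvectorSpan (γ := γ) hw_nonneg hw_symm hrow hcol
    hπ'_symm x
  rw [← hY, hx] at hYx
  rw [Submodule.coe_orthogonalProjectionOnto_apply, mul_assoc]
  refine le_div_of_mul_sq_le hθ hθγ hγ (by positivity) ?_
  nlinarith

/-- In the setting of Statement 12, if moreover `Y` is the span of
eigenvectors of `M̃` with eigenvalue at least `(1−γ)d` and `Y ≠ ℝ^{nk}`, then every
unit eigenvector `x` of `M` with eigenvalue at least `(1−θ)d` satisfies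
`‖x − P_Y x‖ ≤ (2C√ε + 2√(θ/γ)) / (γ − θ)`. -/
theorem eigenvector_close_to_perturbed_eigenspace
    {n k : ℕ} (hn : 0 < n)
    (w : Fin n → Fin n → ℝ) (d ε C θ γ : ℝ)
    (hd : 0 < d) (hε : 0 ≤ ε) (hθ : 0 < θ) (hθγ : θ < γ) (hγ : γ ≤ 1)
    (π π' : Fin n → Fin n → Equiv.Perm (Fin k))
    (hw_symm : ∀ u v, w u v = w v u)
    (hw_nonneg : ∀ u v, 0 ≤ w u v)
    (hw_le_one : ∀ u v, w u v ≤ 1)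
    (hπ_symm : ∀ u v, π v u = (π u v)⁻¹)
    (hπ'_symm : ∀ u v, π' v u = (π' u v)⁻¹)
    (hreg : ∀ u, ∑ v, w u v = d)
    (hdiff : (1 / 2) * ∑ u, ∑ v, (if π u v = π' u v then 0 else w u v)
        ≤ ε * n * d / 2)
    (A : Matrix (Fin n) (Fin n) ℝ) (hA : ∀ u v, A u v = w u v)
    (M : Matrix (Fin n × Fin k) (Fin n × Fin k) ℝ)
    (hM : ∀ p q, M p q = w p.1 q.1 * (if π p.1 q.1 p.2 = q.2 then 1 else 0))
    (Mt : Matrix (Fin n × Fin k) (Fin n × Fin k) ℝ)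
    (hMt : ∀ p q, Mt p q = w p.1 q.1 * (if π' p.1 q.1 p.2 = q.2 then 1 else 0))
    (S : Submodule ℝ (EuclideanSpace ℝ (Fin n)))
    (hS : S = Submodule.span ℝ {φ : EuclideanSpace ℝ (Fin n) |
        φ ≠ 0 ∧ ∃ μ : ℝ, (1 - γ) * d < μ ∧ A.mulVec φ = μ • φ})
    (hC : ∀ φ : EuclideanSpace ℝ (Fin n), φ ∈ S → ‖φ‖ = 1 →
        ∀ u, |φ u| ≤ C / Real.sqrt n)
    (Y : Submodule ℝ (EuclideanSpace ℝ (Fin n × Fin k)))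
    (hY : Y = Submodule.span ℝ {v : EuclideanSpace ℝ (Fin n × Fin k) |
        v ≠ 0 ∧ ∃ ν : ℝ, (1 - γ) * d ≤ ν ∧ Mt.mulVec v = ν • v})
    (hYne : Y ≠ ⊤)
    (x : EuclideanSpace ℝ (Fin n × Fin k)) (hx : ‖x‖ = 1)
    (lam : ℝ) (hlam : (1 - θ) * d ≤ lam)
    (hxeig : M.mulVec x = lam • x) :
    ‖x - (Y.orthogonalProjectionOnto x : EuclideanSpace ℝ (Fin n × Fin k))‖
      ≤ (2 * C * Real.sqrt ε + 2 * Real.sqrt (θ / γ)) / (γ - θ) :=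
  eigenvector_close_to_perturbed_eigenspace_general hn w d ε C θ γ hd hε hθ hθγ hγ π π' hw_symm
    hw_nonneg hπ'_symm hreg hdiff A hA M hM Mt hMt S hS hC Y hY x hx lam hlam hxeig
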